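/- Let A be a unital C*-algebra and let α, γ ∈ A satisfy the SU_q(2) relations; let v_{i,j} = v_{i,j}(α, γ). Then for all r, p ∈ {−1, 0, 1}: σ²·ζ^{rp}·v_{−1,r}v_{0,p} − ςσ²·ζ^{r(p+1)}·v_{0,r}v_{−1,p} equals 0 if r + p ∉ {−1, 0, 1}, and equals λ_{r,p}·v_{−1,r+p} otherwise, where λ_{−1,0} = σ², λ_{−1,1} = −ς, λ_{0,−1} = −ςσ², λ_{0,0} = 1 − ς², λ_{0,1} = σ², λ_{1,−1} = ς, λ_{1,0} = −ςσ². -/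

import Mathlib

open scoped ComplexConjugate

/-- Elements `α`, `γ` of a unital C*-algebra satisfy the SU_q(2) relations. -/
def SUq2Rel {A : Type*} [Ring A] [StarRing A] [Module ℂ A] (q : ℂ) (α γ : A) : Prop :=
  star α * α + star γ * γ = 1 ∧
  α * star α + ((‖q‖ : ℂ) ^ 2) • (star γ * γ) = 1 ∧
  α * γ = conj q • (γ * α) ∧
  γ * star γ = star γ * γ

/-- `ζ = q / conj q`. -/
noncomputable def zetaC (q : ℂ) : ℂ := q / conj q

/-- `ς = |q|²`, as a complex scalar. -/
noncomputable def vsig (q : ℂ) : ℂ := (‖q‖ : ℂ) ^ 2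

/-- `σ² = 1 + |q|²`, as a complex scalar. -/
noncomputable def sigSq (q : ℂ) : ℂ := 1 + vsig q

/-- The matrix elements `v_{i,j}(x, y)`, `i, j ∈ {-1, 0, 1}` (and `0` for other indices). -/
noncomputable def vij {A : Type*} [Ring A] [StarRing A] [Module ℂ A]
    (q : ℂ) (x y : A) (i j : ℤ) : A :=
  if i = -1 then
    if j = -1 then x ^ 2
    else if j = 0 then -(sigSq q • (star y * x))
    else if j = 1 then -(q • star y ^ 2)
    else 0
  else if i = 0 then
    if j = -1 then zetaC q • (x * y)
    else if j = 0 then 1 - sigSq q • (star y * y)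
    else if j = 1 then star y * star x
    else 0
  else if i = 1 then
    if j = -1 then -((q * zetaC q) • y ^ 2)
    else if j = 0 then -(sigSq q • (star x * y))
    else if j = 1 then star x ^ 2
    else 0
  else 0

/-- The coefficients `λ_{r,p}` (and `0` for the two excluded index pairs). -/
noncomputable def lamRP (q : ℂ) (r p : ℤ) : ℂ :=
  if r = -1 ∧ p = 0 then sigSq q
  else if r = -1 ∧ p = 1 then -(vsig q)
  else if r = 0 ∧ p = -1 then -(vsig q * sigSq q)
  else if r = 0 ∧ p = 0 then 1 - vsig q ^ 2
  else if r = 0 ∧ p = 1 then sigSq q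
  else if r = 1 ∧ p = -1 then vsig q
  else if r = 1 ∧ p = 0 then -(vsig q * sigSq q)
  else 0

/-!
Besides the defining relations, the computation needs `α γ* = q γ* α`. In a C*-algebra this
follows from the others: for `x = α γ* - q γ* α`, the relations alone reduce `x x*` to `0`,
so `x = 0`. With this relation every product `v_{-1,r} v_{0,p}` and `v_{0,r} v_{-1,p}` can be
rewritten into a combination of normally ordered monomials (`γ*` before `γ` before `α`, `α*`,
with `α α*` and `α* α` eliminated), and each of the nine identities becomes an identity
between rational functions of `q` and `conj q`.
-/

theorem mul_mul_eq_of_mul_eq {R : Type*} [Semigroup R] {a b c : R} (h : a * b = c) (x : R) :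
    a * (b * x) = c * x := by
  rw [← mul_assoc, h]

theorem vsig_eq_mul_conj (q : ℂ) : vsig q = q * conj q := by
  rw [vsig, Complex.mul_conj, ← Complex.ofReal_pow, Complex.sq_norm]

namespace SUq2Rel

section StarAlgebra

variable {A : Type*} [Ring A] [StarRing A] [Algebra ℂ A] {q : ℂ} {α γ : A}

theorem star_mul_self_left (h : SUq2Rel q α γ) : star α * α = 1 - star γ * γ :=
  eq_sub_of_add_eq h.1

theorem mul_star_self_left (h : SUq2Rel q α γ) : α * star α = 1 - vsig q • (star γ * γ) :=
  eq_sub_of_add_eq h.2.1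

variable [StarModule ℂ A]

theorem star_mul_star (h : SUq2Rel q α γ) : star γ * star α = q • (star α * star γ) := by
  simpa [star_smul] using congrArg star h.2.2.1

theorem star_mul_star_comm (hq : q ≠ 0) (h : SUq2Rel q α γ) :
    star α * star γ = q⁻¹ • (star γ * star α) := by
  rw [h.star_mul_star, smul_smul, inv_mul_cancel₀ hq, one_smul]

theorem vij_exchange (hq : q ≠ 0) (h : SUq2Rel q α γ) (hαγ : α * star γ = q • (star γ * α)) :
    ∀ r ∈ ({-1, 0, 1} : Finset ℤ), ∀ p ∈ ({-1, 0, 1} : Finset ℤ),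
      (sigSq q * zetaC q ^ (r * p)) • (vij q α γ (-1) r * vij q α γ 0 p)
        - (vsig q * sigSq q * zetaC q ^ (r * (p + 1))) • (vij q α γ 0 r * vij q α γ (-1) p)
      = if r + p ∈ ({-1, 0, 1} : Finset ℤ) then lamRP q r p • vij q α γ (-1) (r + p)
        else 0 := by
  have hq' : conj q ≠ 0 := by simpa using hq
  intro r hr p hp
  fin_cases hr <;> fin_cases hp <;>
  · norm_num [vij, lamRP, zpow_neg, zpow_two, pow_two]
    simp only [mul_sub, sub_mul, mul_one, one_mul, smul_sub, smul_smul, smul_mul_assoc,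
      mul_smul_comm, mul_assoc, mul_mul_eq_of_mul_eq h.2.2.1, h.2.2.1, mul_mul_eq_of_mul_eq hαγ, hαγ,
      mul_mul_eq_of_mul_eq (star_mul_star_comm hq h), star_mul_star_comm hq h,
      h.mul_star_self_left, mul_mul_eq_of_mul_eq h.star_mul_self_left, h.star_mul_self_left,
      mul_mul_eq_of_mul_eq h.2.2.2, h.2.2.2]
    match_scalars <;> simp only [sigSq, vsig_eq_mul_conj, zetaC] <;> field_simp <;> ring

end StarAlgebra

theorem mul_star_comm {A : Type*} [NormedRing A] [StarRing A] [CStarRing A] [Algebra ℂ A]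
    [StarModule ℂ A] {q : ℂ} {α γ : A} (h : SUq2Rel q α γ) :
    α * star γ = q • (star γ * α) := by
  set x := α * star γ - q • (star γ * α)
  have hx : x * star x = 0 := by
    have hs : star x = γ * star α - conj q • (star α * γ) := by
      simp [x, star_smul]
    rw [hs]
    simp only [x, sub_mul, mul_sub, smul_mul_assoc, mul_smul_comm, mul_assoc, smul_sub, smul_smul,
      mul_mul_eq_of_mul_eq h.2.2.1, mul_mul_eq_of_mul_eq h.star_mul_star, h.star_mul_star,
      mul_mul_eq_of_mul_eq h.mul_star_self_left, h.mul_star_self_left,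
      mul_mul_eq_of_mul_eq h.2.2.2.symm, h.2.2.2.symm, one_mul, mul_one]
    simp only [vsig_eq_mul_conj]
    module
  exact sub_eq_zero.mp ((CStarRing.mul_star_self_eq_zero_iff x).mp hx)

end SUq2Rel

theorem stmt7_general (q : ℂ) (hq0 : 0 < ‖q‖)
    {A : Type*} [NormedRing A] [StarRing A] [CStarRing A] [NormedAlgebra ℂ A]
    [StarModule ℂ A]
    (α γ : A) (h : SUq2Rel q α γ) :
    ∀ r ∈ ({-1, 0, 1} : Finset ℤ), ∀ p ∈ ({-1, 0, 1} : Finset ℤ),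
      (sigSq q * zetaC q ^ (r * p)) • (vij q α γ (-1) r * vij q α γ 0 p)
        - (vsig q * sigSq q * zetaC q ^ (r * (p + 1))) • (vij q α γ 0 r * vij q α γ (-1) p)
      = if r + p ∈ ({-1, 0, 1} : Finset ℤ) then lamRP q r p • vij q α γ (-1) (r + p)
        else 0 :=
  h.vij_exchange (norm_pos_iff.mp hq0) h.mul_star_comm

theorem stmt7 (q : ℂ) (hq0 : 0 < ‖q‖) (hq1 : ‖q‖ < 1)
    {A : Type*} [NormedRing A] [StarRing A] [CStarRing A] [NormedAlgebra ℂ A]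
    [StarModule ℂ A] [CompleteSpace A]
    (α γ : A) (h : SUq2Rel q α γ) :
    ∀ r ∈ ({-1, 0, 1} : Finset ℤ), ∀ p ∈ ({-1, 0, 1} : Finset ℤ),
      (sigSq q * zetaC q ^ (r * p)) • (vij q α γ (-1) r * vij q α γ 0 p)
        - (vsig q * sigSq q * zetaC q ^ (r * (p + 1))) • (vij q α γ 0 r * vij q α γ (-1) p)
      = if r + p ∈ ({-1, 0, 1} : Finset ℤ) then lamRP q r p • vij q α γ (-1) (r + p)
        else 0 :=
  stmt7_general q hq0 α γ h
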